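/- arXiv:2602.13759 — 3 statements merged into one kernel-verified Lean document; each statement's English description precedes it below -/
import Mathlib

section
/- Let C_e be a symmetric n×n real matrix with n distinct eigenvalues λ₁ > ⋯ > λ_n and spectral gap g := min_{i≠j}|λ_i − λ_j| > 0. Then for every orthogonal matrix M, with A := Mᵀ C_e M and f(M) := (1/2)‖off(A)‖_F², the diagonal separation satisfies min_{i≠j}|A_{ii} − A_{jj}| ≥ g − 2√(2 f(M)); equivalently, δ(M) ≥ g − 2‖off(A)‖_F. -/
open Matrix

/-- The diagonal matrix whose diagonal agrees with `X`. -/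
noncomputable def diagPart {n : ℕ} (X : Matrix (Fin n) (Fin n) ℝ) :
    Matrix (Fin n) (Fin n) ℝ :=
  Matrix.diagonal (fun i => X i i)

/-- Frobenius norm of a real square matrix. -/
noncomputable def frobNorm {n : ℕ} (X : Matrix (Fin n) (Fin n) ℝ) : ℝ :=
  Real.sqrt (∑ i, ∑ j, (X i j) ^ 2)

/-- Rotated covariance `A(M) = Mᵀ C_e M`. -/
noncomputable def rotA {n : ℕ} (Ce M : Matrix (Fin n) (Fin n) ℝ) :
    Matrix (Fin n) (Fin n) ℝ := Mᵀ * Ce * M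

/-- The diagonalization objective `f(M) = (1/2)‖off(A(M))‖_F²`. -/
noncomputable def objF {n : ℕ} (Ce M : Matrix (Fin n) (Fin n) ℝ) : ℝ :=
  (1 / 2) * frobNorm (rotA Ce M - diagPart (rotA Ce M)) ^ 2

/-!
Write `A = Uᵀ Λ U` with `U = Qᵀ M` orthogonal and `Λ = diag λ`. Since `U A = Λ U`, the `i`-th
column `u` of `U` satisfies `(Λ - Aᵢᵢ) u = U · (column i of off(A))`, so the residual
`‖(Λ - Aᵢᵢ) u‖` of `Aᵢᵢ` as an approximate eigenvalue is the norm of the `i`-th column of off(A).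
For `i ≠ j` these columns are disjoint, so the residuals `rₐ, r_b` of the orthonormal columns
`a`, `b` for `α = Aᵢᵢ`, `β = Aⱼⱼ` satisfy `rₐ² + r_b² ≤ ε² := ‖off(A)‖_F²`. If `|α - β| < g - 2ε`,
then `α` is within `ε` of some `λ_{k₀}`, and every other eigenvalue is at
distance more than `ε` from both `α` and `β`. Hence the masses `Sₐ, S_b` that `a` and `b`
put off the coordinate `k₀` satisfy `Sₐ + S_b < 1`, whereas for orthonormal vectors Cauchy–Schwarz
gives `(1 - Sₐ)(1 - S_b) = (a_{k₀} b_{k₀})² ≤ Sₐ S_b`, i.e. `Sₐ + S_b ≥ 1`.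
-/

open Finset

section ApproximateEigenvalues

variable {ι : Type*} [Fintype ι]

theorem exists_sq_sub_le_sum_sq_mul {lam a : ι → ℝ} (ha : ∑ k, a k ^ 2 = 1) (α : ℝ) :
    ∃ k₀, (lam k₀ - α) ^ 2 ≤ ∑ k, ((lam k - α) * a k) ^ 2 := by
  obtain ⟨k₀, -, hmin⟩ := exists_min_image univ (fun k => (lam k - α) ^ 2)
    (nonempty_of_sum_ne_zero (ha ▸ one_ne_zero))
  refine ⟨k₀, ?_⟩
  calc (lam k₀ - α) ^ 2 = ∑ k, (lam k₀ - α) ^ 2 * a k ^ 2 := by rw [← mul_sum, ha, mul_one]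
    _ ≤ ∑ k, ((lam k - α) * a k) ^ 2 := sum_le_sum fun k _ => by
      rw [mul_pow]
      exact mul_le_mul_of_nonneg_right (hmin k (mem_univ k)) (sq_nonneg _)

variable [DecidableEq ι]

theorem sq_mul_sum_erase_sq_le {lam a : ι → ℝ} {α t : ℝ} {k₀ : ι} (ht : 0 ≤ t)
    (hfar : ∀ k ≠ k₀, t ≤ |lam k - α|) :
    t ^ 2 * ∑ k ∈ univ.erase k₀, a k ^ 2 ≤ ∑ k, ((lam k - α) * a k) ^ 2 := by
  rw [mul_sum]
  calc ∑ k ∈ univ.erase k₀, t ^ 2 * a k ^ 2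
      ≤ ∑ k ∈ univ.erase k₀, ((lam k - α) * a k) ^ 2 := sum_le_sum fun k hk => by
        rw [mul_pow]
        refine mul_le_mul_of_nonneg_right (sq_le_sq.2 ?_) (sq_nonneg _)
        rw [abs_of_nonneg ht]
        exact hfar k (ne_of_mem_erase hk)
    _ ≤ ∑ k, ((lam k - α) * a k) ^ 2 :=
        sum_le_sum_of_subset_of_nonneg (erase_subset _ _) fun _ _ _ => sq_nonneg _

theorem one_le_sum_erase_sq_add_sum_erase_sq {a b : ι → ℝ} (ha : ∑ k, a k ^ 2 = 1)
    (hb : ∑ k, b k ^ 2 = 1) (hab : ∑ k, a k * b k = 0) (k₀ : ι) :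
    1 ≤ ∑ k ∈ univ.erase k₀, a k ^ 2 + ∑ k ∈ univ.erase k₀, b k ^ 2 := by
  set Sa := ∑ k ∈ univ.erase k₀, a k ^ 2
  set Sb := ∑ k ∈ univ.erase k₀, b k ^ 2
  have hak₀ : a k₀ ^ 2 = 1 - Sa := by rw [← ha, ← add_sum_erase _ _ (mem_univ k₀)]; ring
  have hbk₀ : b k₀ ^ 2 = 1 - Sb := by rw [← hb, ← add_sum_erase _ _ (mem_univ k₀)]; ring
  have habk₀ : a k₀ * b k₀ = -∑ k ∈ univ.erase k₀, a k * b k := by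
    rw [← add_sum_erase _ _ (mem_univ k₀)] at hab; linarith
  have : (1 - Sa) * (1 - Sb) ≤ Sa * Sb :=
    calc (1 - Sa) * (1 - Sb) = (∑ k ∈ univ.erase k₀, a k * b k) ^ 2 := by
          rw [← hak₀, ← hbk₀, ← mul_pow, habk₀, neg_sq]
      _ ≤ Sa * Sb := sum_mul_sq_le_sq_mul_sq _ a b
  nlinarith

theorem sub_two_mul_le_abs_sub_of_orthonormal {lam a b : ι → ℝ} {g α β ε : ℝ}
    (hgap : ∀ i j, i ≠ j → g ≤ |lam i - lam j|) (ha : ∑ k, a k ^ 2 = 1)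
    (hb : ∑ k, b k ^ 2 = 1) (hab : ∑ k, a k * b k = 0) (hε : 0 ≤ ε)
    (hres : ∑ k, ((lam k - α) * a k) ^ 2 + ∑ k, ((lam k - β) * b k) ^ 2 ≤ ε ^ 2) :
    g - 2 * ε ≤ |α - β| := by
  by_contra! hlt
  set t := g - ε - |α - β|
  have hεt : ε < t := by linarith
  obtain ⟨k₀, hk₀⟩ := exists_sq_sub_le_sum_sq_mul (lam := lam) ha α
  have hk₀α : |lam k₀ - α| ≤ ε := by
    have : 0 ≤ ∑ k, ((lam k - β) * b k) ^ 2 := sum_nonneg fun _ _ => sq_nonneg _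
    exact (sq_le_sq.1 (by linarith)).trans_eq (abs_of_nonneg hε)
  have hfar : ∀ k ≠ k₀, t ≤ |lam k - α| ∧ t ≤ |lam k - β| := by
    intro k hk
    have hg := hgap k k₀ hk
    have hα := abs_sub_le (lam k) α (lam k₀)
    have hβ := abs_sub_le (lam k) β (lam k₀)
    have hβα := abs_sub_le β α (lam k₀)
    rw [abs_sub_comm α] at hα hβα
    constructor <;> linarith [abs_nonneg (α - β), abs_sub_comm β α]
  have ht : 0 ≤ t := hε.trans hεt.le
  have hSa := sq_mul_sum_erase_sq_le (a := a) ht fun k hk => (hfar k hk).1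
  have hSb := sq_mul_sum_erase_sq_le (a := b) ht fun k hk => (hfar k hk).2
  have htε : t ^ 2 ≤ ε ^ 2 :=
    calc t ^ 2 = t ^ 2 * 1 := (mul_one _).symm
      _ ≤ t ^ 2 * (∑ k ∈ univ.erase k₀, a k ^ 2 + ∑ k ∈ univ.erase k₀, b k ^ 2) :=
        mul_le_mul_of_nonneg_left (one_le_sum_erase_sq_add_sum_erase_sq ha hb hab k₀) (sq_nonneg t)
      _ ≤ ε ^ 2 := by linarith
  exact hεt.not_ge ((pow_le_pow_iff_left₀ ht hε two_ne_zero).1 htε)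

end ApproximateEigenvalues

theorem sum_sq_mul_apply_eq_of_transpose_mul_self {m l : Type*} [Fintype m] [DecidableEq m]
    [Fintype l] {U : Matrix m m ℝ} (hU : Uᵀ * U = 1) (B : Matrix m l ℝ) (i : l) :
    ∑ k, (U * B) k i ^ 2 = ∑ k, B k i ^ 2 := by
  have key : (U * B)ᵀ * (U * B) = Bᵀ * B := by
    rw [transpose_mul, Matrix.mul_assoc, ← Matrix.mul_assoc Uᵀ, hU, Matrix.one_mul]
  simpa only [mul_apply, transpose_apply, sq] using congrFun (congrFun key i) i

theorem mul_sub_diagPart_apply {n : ℕ} {U A : Matrix (Fin n) (Fin n) ℝ} {lam : Fin n → ℝ}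
    (hUA : U * A = diagonal lam * U) (k i : Fin n) :
    (U * (A - diagPart A)) k i = (lam k - A i i) * U k i := by
  rw [Matrix.mul_sub, hUA, diagPart, Matrix.sub_apply, diagonal_mul, mul_diagonal]
  ring

theorem frobNorm_nonneg {n : ℕ} (X : Matrix (Fin n) (Fin n) ℝ) : 0 ≤ frobNorm X :=
  Real.sqrt_nonneg _

theorem sum_sq_col_add_le_frobNorm_sq {n : ℕ} (X : Matrix (Fin n) (Fin n) ℝ) {i j : Fin n}
    (hij : i ≠ j) : ∑ k, X k i ^ 2 + ∑ k, X k j ^ 2 ≤ frobNorm X ^ 2 := by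
  rw [frobNorm, Real.sq_sqrt (by positivity), sum_comm]
  calc ∑ k, X k i ^ 2 + ∑ k, X k j ^ 2 = ∑ l ∈ {i, j}, ∑ k, X k l ^ 2 :=
        (sum_pair (f := fun l => ∑ k, X k l ^ 2) hij).symm
    _ ≤ ∑ l, ∑ k, X k l ^ 2 :=
      sum_le_sum_of_subset_of_nonneg (subset_univ _) fun _ _ _ => by positivity

theorem sqrt_two_mul_objF {n : ℕ} (Ce M : Matrix (Fin n) (Fin n) ℝ) :
    Real.sqrt (2 * objF Ce M) = frobNorm (rotA Ce M - diagPart (rotA Ce M)) := by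
  rw [objF, show ∀ x : ℝ, 2 * (1 / 2 * x ^ 2) = x ^ 2 by intro; ring,
    Real.sqrt_sq (frobNorm_nonneg _)]

theorem mul_rotA_eq_diagonal_mul {n : ℕ} {Ce Q M : Matrix (Fin n) (Fin n) ℝ} {lam : Fin n → ℝ}
    (hQ : Qᵀ * Q = 1) (hdiag : Qᵀ * Ce * Q = diagonal lam) (hM : Mᵀ * M = 1) :
    Qᵀ * M * rotA Ce M = diagonal lam * (Qᵀ * M) := by
  have hQ' : Q * Qᵀ = 1 := mul_eq_one_comm.mp hQ
  have hM' : M * Mᵀ = 1 := mul_eq_one_comm.mp hM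
  calc Qᵀ * M * rotA Ce M = Qᵀ * (M * Mᵀ) * Ce * (Q * Qᵀ) * M := by
        simp only [rotA, hQ', Matrix.mul_one, Matrix.mul_assoc]
    _ = diagonal lam * (Qᵀ * M) := by
        rw [hM', Matrix.mul_one, ← hdiag]; simp only [Matrix.mul_assoc]

theorem diagonal_separation_lower_bound_general {n : ℕ}
    (Ce : Matrix (Fin n) (Fin n) ℝ)
    (lam : Fin n → ℝ)
    (Q : Matrix (Fin n) (Fin n) ℝ) (hQ : Qᵀ * Q = 1)
    (hdiag : Qᵀ * Ce * Q = Matrix.diagonal lam)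
    (g : ℝ)
    (hgap : ∀ i j : Fin n, i ≠ j → g ≤ |lam i - lam j|)
    (M : Matrix (Fin n) (Fin n) ℝ) (hM : Mᵀ * M = 1) :
    (∀ i j : Fin n, i ≠ j →
      g - 2 * Real.sqrt (2 * objF Ce M) ≤ |rotA Ce M i i - rotA Ce M j j|) ∧
    (∀ i j : Fin n, i ≠ j →
      g - 2 * frobNorm (rotA Ce M - diagPart (rotA Ce M))
        ≤ |rotA Ce M i i - rotA Ce M j j|) := by
  have hUA := mul_rotA_eq_diagonal_mul hQ hdiag hM
  set U := Qᵀ * M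
  have hU : Uᵀ * U = 1 := by
    rw [transpose_mul, transpose_transpose, Matrix.mul_assoc, ← Matrix.mul_assoc Q,
      mul_eq_one_comm.mp hQ, Matrix.one_mul, hM]
  have hcol (i j : Fin n) : ∑ k, U k i * U k j = (1 : Matrix (Fin n) (Fin n) ℝ) i j := by
    rw [← hU, mul_apply]; rfl
  have hsep (i j : Fin n) (hij : i ≠ j) : g - 2 * frobNorm (rotA Ce M - diagPart (rotA Ce M))
      ≤ |rotA Ce M i i - rotA Ce M j j| := by
    refine sub_two_mul_le_abs_sub_of_orthonormal hgap (by simpa [sq] using hcol i i)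
      (by simpa [sq] using hcol j j) (by simpa [hij] using hcol i j) (frobNorm_nonneg _) ?_
    simp only [← mul_sub_diagPart_apply hUA, sum_sq_mul_apply_eq_of_transpose_mul_self hU]
    exact sum_sq_col_add_le_frobNorm_sq _ hij
  exact ⟨by simpa only [sqrt_two_mul_objF] using hsep, hsep⟩

/-- **Domain radius bound**: if `C_e` has distinct eigenvalues with spectral gap `g`,
then the diagonal separation satisfies
`min_{i≠j} |A_ii − A_jj| ≥ g − 2√(2 f(M)) = g − 2‖off(A)‖_F`. -/
theorem diagonal_separation_lower_bound {n : ℕ} (hn : 2 ≤ n)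
    (Ce : Matrix (Fin n) (Fin n) ℝ) (hCe : Ceᵀ = Ce)
    (lam : Fin n → ℝ) (hdistinct : ∀ i j : Fin n, i < j → lam j < lam i)
    (Q : Matrix (Fin n) (Fin n) ℝ) (hQ : Qᵀ * Q = 1)
    (hdiag : Qᵀ * Ce * Q = Matrix.diagonal lam)
    (g : ℝ) (hgpos : 0 < g)
    (hgap : ∀ i j : Fin n, i ≠ j → g ≤ |lam i - lam j|)
    (M : Matrix (Fin n) (Fin n) ℝ) (hM : Mᵀ * M = 1) :
    (∀ i j : Fin n, i ≠ j →
      g - 2 * Real.sqrt (2 * objF Ce M) ≤ |rotA Ce M i i - rotA Ce M j j|) ∧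
    (∀ i j : Fin n, i ≠ j →
      g - 2 * frobNorm (rotA Ce M - diagPart (rotA Ce M))
        ≤ |rotA Ce M i i - rotA Ce M j j|) :=
  diagonal_separation_lower_bound_general Ce lam Q hQ hdiag g hgap M hM
end

section
/- Fix n ≥ 1 and a symmetric matrix C_e ∈ ℝ^{n×n}. Let M be orthogonal and Ξ ∈ ℝ^{n×n} skew-symmetric. Then the map t ↦ f(M·exp(tΞ)) is differentiable at t = 0 with derivative d/dt|_{t=0} f(M exp(tΞ)) = −⟨Ω(M), Ξ⟩_F. Consequently, the derivative of f along every such one-parameter curve vanishes at M if and only if Ω(M) = 0, i.e., if and only if (A(M)_{jj} − A(M)_{ii})·A(M)_{ij} = 0 for all i ≠ j. -/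
open Matrix

/-- Frobenius inner product `⟨X, Y⟩_F = tr(Xᵀ Y)`. -/
noncomputable def frobInner {n : ℕ} (X Y : Matrix (Fin n) (Fin n) ℝ) : ℝ :=
  Matrix.trace (Xᵀ * Y)

/-- The commutator generator `Ω(M) = A D − D A`. -/
noncomputable def genOmega {n : ℕ} (Ce M : Matrix (Fin n) (Fin n) ℝ) :
    Matrix (Fin n) (Fin n) ℝ :=
  rotA Ce M * diagPart (rotA Ce M) - diagPart (rotA Ce M) * rotA Ce M

/-!
Write `A = A(M)`, `D = diag A` and `B(t) = exp(tΞ)ᵀ A exp(tΞ)`, so that `A(M exp(tΞ)) = B(t)` and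
`B'(0) = ΞᵀA + AΞ = AΞ - ΞA`. Since `off A` is Frobenius-orthogonal to diagonal matrices,
`d/dt|₀ f = ⟨off A, B'(0)⟩_F = tr((A - D)(AΞ - ΞA)) = tr(ΩΞ) = -⟨Ω, Ξ⟩_F`,
by cyclicity of the trace and `Ωᵀ = -Ω`. Because `Ω` is itself skew-symmetric, the direction
`Ξ = Ω` gives derivative `-‖Ω‖_F²`, so all first variations vanish iff `Ω = 0`; entrywise
`Ω_ij = (A_jj - A_ii) A_ij`, which vanishes on the diagonal.
-/

section Frobenius

variable {n : ℕ}

theorem frobInner_eq_sum (X Y : Matrix (Fin n) (Fin n) ℝ) :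
    frobInner X Y = ∑ i, ∑ j, X i j * Y i j := by
  simp only [frobInner, trace, diag_apply, mul_apply, transpose_apply]
  exact Finset.sum_comm

theorem frobNorm_sq_eq_frobInner_self (X : Matrix (Fin n) (Fin n) ℝ) :
    frobNorm X ^ 2 = frobInner X X := by
  rw [frobNorm, Real.sq_sqrt (by positivity), frobInner_eq_sum]
  simp only [sq]

theorem frobInner_sub_right (X Y Z : Matrix (Fin n) (Fin n) ℝ) :
    frobInner X (Y - Z) = frobInner X Y - frobInner X Z := by
  simp only [frobInner, Matrix.mul_sub, trace_sub]

theorem frobInner_self_eq_zero_iff {X : Matrix (Fin n) (Fin n) ℝ} :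
    frobInner X X = 0 ↔ X = 0 := by
  simpa [frobInner] using trace_conjTranspose_mul_self_eq_zero_iff (A := X)

theorem sub_diagPart_apply (X : Matrix (Fin n) (Fin n) ℝ) (i j : Fin n) :
    (X - diagPart X) i j = if i = j then 0 else X i j := by
  split_ifs with h
  · subst h; simp [diagPart]
  · simp [diagPart, diagonal_apply_ne _ h]

theorem frobInner_sub_diagPart_diagPart (X Y : Matrix (Fin n) (Fin n) ℝ) :
    frobInner (X - diagPart X) (diagPart Y) = 0 := by
  rw [frobInner_eq_sum]
  refine Finset.sum_eq_zero fun i _ => Finset.sum_eq_zero fun j _ => ?_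
  rw [sub_diagPart_apply]
  split_ifs with h
  · exact zero_mul _
  · simp [diagPart, diagonal_apply_ne _ h]

theorem transpose_diagPart (X : Matrix (Fin n) (Fin n) ℝ) : (diagPart X)ᵀ = diagPart X :=
  diagonal_transpose _

end Frobenius

section Calculus

theorem HasDerivAt.matrix_apply {𝕜 m p : Type*} [NontriviallyNormedField 𝕜] [CompleteSpace 𝕜]
    [Fintype m] [Fintype p] {X : 𝕜 → Matrix m p 𝕜} {X' : Matrix m p 𝕜} {t : 𝕜}
    (h : HasDerivAt X X' t) (i : m) (j : p) :
    HasDerivAt (fun s => X s i j) (X' i j) t := by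
  let _ := Matrix.linftyOpNormedAddCommGroup (m := m) (n := p) (α := 𝕜)
  let _ := Matrix.linftyOpNormedSpace (m := m) (n := p) (R := 𝕜) (α := 𝕜)
  exact (entryLinearMap 𝕜 𝕜 i j).toContinuousLinearMap.hasFDerivAt.comp_hasDerivAt t h

theorem hasDerivAt_transpose_exp_mul_mul_exp {m : Type*} [Fintype m] [DecidableEq m]
    (A Ξ : Matrix m m ℝ) :
    HasDerivAt (fun t : ℝ => (NormedSpace.exp (t • Ξ))ᵀ * A * NormedSpace.exp (t • Ξ))
      (Ξᵀ * A + A * Ξ) 0 := by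
  simp only [← exp_transpose, transpose_smul]
  let _ := Matrix.linftyOpNormedRing (n := m) (α := ℝ)
  let _ := Matrix.linftyOpNormedAlgebra (n := m) (R := ℝ) (α := ℝ)
  have h := ((hasDerivAt_exp_smul_const Ξᵀ (0 : ℝ)).mul_const A).fun_mul
    (hasDerivAt_exp_smul_const Ξ (0 : ℝ))
  simp only [zero_smul, NormedSpace.exp_zero, one_mul, mul_one] at h
  exact h

variable {n : ℕ} {X : ℝ → Matrix (Fin n) (Fin n) ℝ} {X' : Matrix (Fin n) (Fin n) ℝ} {t : ℝ}

theorem HasDerivAt.sub_diagPart (h : HasDerivAt X X' t) :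
    HasDerivAt (fun s => X s - diagPart (X s)) (X' - diagPart X') t := by
  let _ := Matrix.linftyOpNormedAddCommGroup (m := Fin n) (n := Fin n) (α := ℝ)
  let _ := Matrix.linftyOpNormedSpace (m := Fin n) (n := Fin n) (R := ℝ) (α := ℝ)
  exact h.sub <| (diagonalLinearMap (Fin n) ℝ ℝ ∘ₗ diagLinearMap (Fin n) ℝ ℝ)
    |>.toContinuousLinearMap.hasFDerivAt.comp_hasDerivAt t h

theorem HasDerivAt.frobNorm_sq (h : HasDerivAt X X' t) :
    HasDerivAt (fun s => frobNorm (X s) ^ 2) (2 * frobInner (X t) X') t := by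
  simp only [frobNorm_sq_eq_frobInner_self, frobInner_eq_sum]
  have hsum := HasDerivAt.fun_sum fun i (_ : i ∈ Finset.univ) =>
    HasDerivAt.fun_sum fun j (_ : j ∈ Finset.univ) =>
      (h.matrix_apply i j).fun_mul (h.matrix_apply i j)
  refine hsum.congr_deriv ?_
  simp only [Finset.mul_sum]
  exact Finset.sum_congr rfl fun i _ => Finset.sum_congr rfl fun j _ => by ring

end Calculus

theorem trace_sub_mul_commutator {m R : Type*} [Fintype m] [CommRing R] (A D Ξ : Matrix m m R) :
    trace ((A - D) * (A * Ξ - Ξ * A)) = trace ((A * D - D * A) * Ξ) := by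
  simp only [sub_mul, mul_sub, trace_sub, Matrix.mul_assoc]
  rw [trace_mul_cycle' A Ξ A, trace_mul_cycle' D Ξ A]
  abel

section Rotation

variable {n : ℕ} (Ce M : Matrix (Fin n) (Fin n) ℝ)

theorem rotA_mul (N : Matrix (Fin n) (Fin n) ℝ) : rotA Ce (M * N) = Nᵀ * rotA Ce M * N := by
  simp only [rotA, transpose_mul, Matrix.mul_assoc]

theorem rotA_transpose (hCe : Ceᵀ = Ce) : (rotA Ce M)ᵀ = rotA Ce M := by
  simp only [rotA, transpose_mul, transpose_transpose, hCe, Matrix.mul_assoc]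

theorem genOmega_transpose (hCe : Ceᵀ = Ce) : (genOmega Ce M)ᵀ = -genOmega Ce M := by
  rw [genOmega, transpose_sub, transpose_mul, transpose_mul, rotA_transpose Ce M hCe,
    transpose_diagPart, neg_sub]

theorem genOmega_apply (i j : Fin n) :
    genOmega Ce M i j = (rotA Ce M j j - rotA Ce M i i) * rotA Ce M i j := by
  simp only [genOmega, diagPart, Matrix.sub_apply, mul_diagonal, diagonal_mul]
  ring

theorem genOmega_eq_zero_iff :
    genOmega Ce M = 0 ↔
      ∀ i j : Fin n, i ≠ j → (rotA Ce M j j - rotA Ce M i i) * rotA Ce M i j = 0 := by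
  simp only [← genOmega_apply]
  refine ⟨fun h i j _ => by rw [h, Matrix.zero_apply], fun h => ext fun i j => ?_⟩
  rcases eq_or_ne i j with rfl | hij
  · rw [genOmega_apply, sub_self, zero_mul, Matrix.zero_apply]
  · exact h i j hij

theorem hasDerivAt_objF_mul_exp (hCe : Ceᵀ = Ce) {Ξ : Matrix (Fin n) (Fin n) ℝ} (hΞ : Ξᵀ = -Ξ) :
    HasDerivAt (fun t : ℝ => objF Ce (M * NormedSpace.exp (t • Ξ)))
      (-frobInner (genOmega Ce M) Ξ) 0 := by
  set A := rotA Ce M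
  have hA : Aᵀ = A := rotA_transpose Ce M hCe
  have hcurve := (hasDerivAt_transpose_exp_mul_mul_exp A Ξ).sub_diagPart.frobNorm_sq.const_mul
    (1 / 2 : ℝ)
  simp only [zero_smul, NormedSpace.exp_zero, transpose_one, one_mul, mul_one] at hcurve
  simp only [objF, rotA_mul]
  refine hcurve.congr_deriv ?_
  have hoffA : (A - diagPart A)ᵀ = A - diagPart A := by rw [transpose_sub, hA, transpose_diagPart]
  calc
    _ = frobInner (A - diagPart A) (Ξᵀ * A + A * Ξ) := by
      rw [frobInner_sub_right, frobInner_sub_diagPart_diagPart]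
      ring
    _ = trace ((A - diagPart A) * (A * Ξ - Ξ * A)) := by
      rw [frobInner, hoffA, hΞ, Matrix.neg_mul, neg_add_eq_sub]
    _ = trace (genOmega Ce M * Ξ) := trace_sub_mul_commutator A (diagPart A) Ξ
    _ = -frobInner (genOmega Ce M) Ξ := by
      rw [frobInner, genOmega_transpose Ce M hCe, Matrix.neg_mul, trace_neg, neg_neg]

end Rotation

theorem first_variation_and_critical_points_general {n : ℕ}
    (Ce M : Matrix (Fin n) (Fin n) ℝ) (hCe : Ceᵀ = Ce) :
    (∀ Ξ : Matrix (Fin n) (Fin n) ℝ, Ξᵀ = -Ξ →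
      HasDerivAt (fun t : ℝ => objF Ce (M * NormedSpace.exp (t • Ξ)))
        (-(frobInner (genOmega Ce M) Ξ)) 0) ∧
    ((∀ Ξ : Matrix (Fin n) (Fin n) ℝ, Ξᵀ = -Ξ →
      deriv (fun t : ℝ => objF Ce (M * NormedSpace.exp (t • Ξ))) 0 = 0) ↔
      genOmega Ce M = 0) ∧
    (genOmega Ce M = 0 ↔
      ∀ i j : Fin n, i ≠ j → (rotA Ce M j j - rotA Ce M i i) * rotA Ce M i j = 0) := by
  have hderiv := fun Ξ (hΞ : Ξᵀ = -Ξ) => hasDerivAt_objF_mul_exp Ce M hCe hΞ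
  have hΩ := genOmega_transpose Ce M hCe
  refine ⟨hderiv, ⟨fun hcrit => ?_, fun hzero Ξ hΞ => ?_⟩, genOmega_eq_zero_iff Ce M⟩
  · have h := hcrit _ hΩ
    rwa [(hderiv _ hΩ).deriv, neg_eq_zero, frobInner_self_eq_zero_iff] at h
  · rw [(hderiv Ξ hΞ).deriv, hzero, frobInner, transpose_zero, Matrix.zero_mul, trace_zero,
      neg_zero]

/-- **First variation and critical point characterization**: along every geodesic
`t ↦ M exp(tΞ)` with `Ξ` skew-symmetric, `d/dt|₀ f = −⟨Ω(M), Ξ⟩_F`; hence the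
derivative vanishes along all such curves iff `Ω(M) = 0`, iff
`(A_jj − A_ii) A_ij = 0` for all `i ≠ j`. -/
theorem first_variation_and_critical_points {n : ℕ} (hn : 1 ≤ n)
    (Ce M : Matrix (Fin n) (Fin n) ℝ) (hCe : Ceᵀ = Ce) (hM : Mᵀ * M = 1) :
    (∀ Ξ : Matrix (Fin n) (Fin n) ℝ, Ξᵀ = -Ξ →
      HasDerivAt (fun t : ℝ => objF Ce (M * NormedSpace.exp (t • Ξ)))
        (-(frobInner (genOmega Ce M) Ξ)) 0) ∧
    ((∀ Ξ : Matrix (Fin n) (Fin n) ℝ, Ξᵀ = -Ξ →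
      deriv (fun t : ℝ => objF Ce (M * NormedSpace.exp (t • Ξ))) 0 = 0) ↔
      genOmega Ce M = 0) ∧
    (genOmega Ce M = 0 ↔
      ∀ i j : Fin n, i ≠ j → (rotA Ce M j j - rotA Ce M i i) * rotA Ce M i j = 0) :=
  first_variation_and_critical_points_general Ce M hCe
end

section
/- Let X ∈ ℝ^{n×n} be skew-symmetric, set ρ := ‖X‖₂, and define Cay(X) := (I − X)⁻¹(I + X) (well-defined since I − X is invertible for skew-symmetric X), S_K(X) := Σ_{j=0}^{K} X^j, and the Neumann-truncated map Cay^{(K)}(X) := S_K(X)·(I + X). Then: (i) Cay(X) − Cay^{(K)}(X) = X^{K+1}·Cay(X), equivalently Cay^{(K)}(X) = (I − X^{K+1})·Cay(X); (ii) since Cay(X) is orthogonal, ‖Cay(X) − Cay^{(K)}(X)‖_F = ‖X^{K+1}‖_F ≤ √n·ρ^{K+1}; and (iii) if K is even (so X^{K+1} is skew-symmetric), the orthogonality defect satisfies ‖Cay^{(K)}(X)ᵀ·Cay^{(K)}(X) − I‖_F ≤ ‖X^{K+1}‖_F². -/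
/-!
Telescoping gives `S_K(X) (1 - X) = 1 - X^{K+1}`, and `(1 - X) Cay(X) = 1 + X`, so
`Cay^{(K)}(X) = S_K(X) (1 - X) Cay(X) = (1 - X^{K+1}) Cay(X)`. For skew-symmetric `X` the factors
`1 ± X` commute and are transposes of each other, so `Cay(X)` is orthogonal, and the Frobenius norm
is invariant under multiplication by orthogonal matrices. Each column of `A` is `A` applied to
a unit vector, whence `‖A‖_F² ≤ n ‖A‖₂²`. For even `K`, `E = X^{K+1}` is skew-symmetric, so
`(1 - E)ᵀ (1 - E) = 1 - E²` and the orthogonality defect is `-Cay(X)ᵀ E² Cay(X)`, whose Frobenius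
norm is `‖E²‖_F ≤ ‖E‖_F²`.
-/

open Matrix

/-- Spectral (ℓ²-operator) norm of a real square matrix. -/
noncomputable def specNorm {n : ℕ} (X : Matrix (Fin n) (Fin n) ℝ) : ℝ :=
  ‖LinearMap.toContinuousLinearMap (Matrix.toEuclideanLin X)‖

/-- The Cayley map `Cay(X) = (I − X)⁻¹ (I + X)`. -/
noncomputable def cayleyFull {n : ℕ} (X : Matrix (Fin n) (Fin n) ℝ) :
    Matrix (Fin n) (Fin n) ℝ :=
  (1 - X)⁻¹ * (1 + X)

/-- The partial Neumann sum `S_K(X) = Σ_{j=0}^{K} X^j`. -/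
noncomputable def neumannSum {n : ℕ} (K : ℕ) (X : Matrix (Fin n) (Fin n) ℝ) :
    Matrix (Fin n) (Fin n) ℝ :=
  ∑ j ∈ Finset.range (K + 1), X ^ j

/-- The Neumann-truncated Cayley map `Cay^{(K)}(X) = S_K(X)(I + X)`. -/
noncomputable def cayleyTrunc {n : ℕ} (K : ℕ) (X : Matrix (Fin n) (Fin n) ℝ) :
    Matrix (Fin n) (Fin n) ℝ :=
  neumannSum K X * (1 + X)

namespace Matrix

variable {ι R : Type*} [Fintype ι] [DecidableEq ι]

theorem isUnit_one_sub_of_transpose_eq_neg [Field R] [LinearOrder R] [IsStrictOrderedRing R]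
    {X : Matrix ι ι R} (hX : Xᵀ = -X) : IsUnit (1 - X) := by
  rw [isUnit_iff_isUnit_det, isUnit_iff_ne_zero]
  intro hdet
  -- a kernel vector of `1 - X` would be a fixed vector `v = X v`, but `v ⬝ᵥ X v = 0`
  obtain ⟨v, hv, hv0⟩ := exists_mulVec_eq_zero_iff.2 hdet
  have hXv : X *ᵥ v = v := by
    rw [sub_mulVec, one_mulVec, sub_eq_zero] at hv0
    exact hv0.symm
  have hskew : v ⬝ᵥ (X *ᵥ v) = v ⬝ᵥ (Xᵀ *ᵥ v) := by
    rw [dotProduct_mulVec, mulVec_transpose, dotProduct_comm]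
  rw [hX, neg_mulVec, dotProduct_neg, hXv] at hskew
  exact hv (dotProduct_self_eq_zero.1 (by linarith))

theorem isUnit_one_add_of_transpose_eq_neg [Field R] [LinearOrder R] [IsStrictOrderedRing R]
    {X : Matrix ι ι R} (hX : Xᵀ = -X) : IsUnit (1 + X) := by
  simpa using isUnit_one_sub_of_transpose_eq_neg (X := -X) (by rw [transpose_neg, hX])

theorem transpose_mul_self_sub_one_of_transpose_eq_neg [CommRing R] {E Q : Matrix ι ι R}
    (hE : Eᵀ = -E) (hQ : Qᵀ * Q = 1) :
    ((1 - E) * Q)ᵀ * ((1 - E) * Q) - 1 = -(Qᵀ * (E * E) * Q) := by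
  rw [transpose_mul, transpose_sub, transpose_one, hE, sub_neg_eq_add]
  calc Qᵀ * (1 + E) * ((1 - E) * Q) - 1 = Qᵀ * (1 + E) * ((1 - E) * Q) - Qᵀ * Q := by rw [hQ]
    _ = -(Qᵀ * (E * E) * Q) := by noncomm_ring

theorem sum_sq_apply_eq_trace_mul_transpose {m n : Type*} [Fintype m] [Fintype n]
    [CommSemiring R] (M : Matrix m n R) : ∑ i, ∑ j, M i j ^ 2 = trace (M * Mᵀ) := by
  simp [trace, mul_apply, sq]

open scoped Matrix.Norms.L2Operator in
theorem sum_sq_apply_le_l2_opNorm_sq {m n : Type*} [Fintype m] [Fintype n] [DecidableEq n]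
    (M : Matrix m n ℝ) (j : n) : ∑ i, M i j ^ 2 ≤ ‖M‖ ^ 2 := by
  have h := l2_opNorm_mulVec M (EuclideanSpace.single j 1)
  rw [PiLp.norm_single, norm_one, mul_one] at h
  have hcol : ‖(EuclideanSpace.equiv m ℝ).symm (M *ᵥ EuclideanSpace.single j 1)‖ ^ 2 =
      ∑ i, M i j ^ 2 := by
    simp [EuclideanSpace.norm_sq_eq]
  rw [← hcol]
  gcongr

end Matrix

section CayleyTransform

variable {n : ℕ} {X : Matrix (Fin n) (Fin n) ℝ}

theorem one_sub_mul_cayleyFull (hX : Xᵀ = -X) : (1 - X) * cayleyFull X = 1 + X :=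
  mul_nonsing_inv_cancel_left _ _
    ((isUnit_iff_isUnit_det _).1 (isUnit_one_sub_of_transpose_eq_neg hX))

theorem cayleyFull_mul_transpose (hX : Xᵀ = -X) : cayleyFull X * (cayleyFull X)ᵀ = 1 := by
  have hsub := (isUnit_iff_isUnit_det _).1 (isUnit_one_sub_of_transpose_eq_neg hX)
  have hadd := (isUnit_iff_isUnit_det _).1 (isUnit_one_add_of_transpose_eq_neg hX)
  have hcomm : (1 + X) * (1 - X) = (1 - X) * (1 + X) := by noncomm_ring
  rw [cayleyFull, transpose_mul, transpose_nonsing_inv, transpose_sub, transpose_add,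
    transpose_one, hX, ← sub_eq_add_neg, sub_neg_eq_add, mul_assoc, ← mul_assoc (1 + X), hcomm,
    mul_assoc, mul_nonsing_inv _ hadd, mul_one, nonsing_inv_mul _ hsub]

theorem cayleyTrunc_eq_one_sub_pow_mul_cayleyFull (K : ℕ) (hX : Xᵀ = -X) :
    cayleyTrunc K X = (1 - X ^ (K + 1)) * cayleyFull X := by
  rw [cayleyTrunc, ← one_sub_mul_cayleyFull hX, ← mul_assoc, neumannSum, geom_sum_mul_neg]

end CayleyTransform

section MatrixNorms

variable {n : ℕ}

theorem frobNorm_neg (A : Matrix (Fin n) (Fin n) ℝ) : frobNorm (-A) = frobNorm A := by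
  simp [frobNorm]

theorem frobNorm_mul_of_mul_transpose_eq_one {Q : Matrix (Fin n) (Fin n) ℝ}
    (A : Matrix (Fin n) (Fin n) ℝ) (hQ : Q * Qᵀ = 1) : frobNorm (A * Q) = frobNorm A := by
  rw [frobNorm, frobNorm, sum_sq_apply_eq_trace_mul_transpose,
    sum_sq_apply_eq_trace_mul_transpose, transpose_mul, mul_assoc, ← mul_assoc Q, hQ, one_mul]

theorem frobNorm_mul_of_transpose_mul_eq_one {Q : Matrix (Fin n) (Fin n) ℝ}
    (A : Matrix (Fin n) (Fin n) ℝ) (hQ : Qᵀ * Q = 1) : frobNorm (Q * A) = frobNorm A := by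
  rw [frobNorm, frobNorm, sum_sq_apply_eq_trace_mul_transpose,
    sum_sq_apply_eq_trace_mul_transpose, transpose_mul, mul_assoc, trace_mul_comm, mul_assoc,
    mul_assoc, hQ, mul_one]

attribute [local instance] Matrix.frobeniusSeminormedAddCommGroup in
theorem frobNorm_eq_frobenius_norm (A : Matrix (Fin n) (Fin n) ℝ) : frobNorm A = ‖A‖ := by
  simp only [frobNorm, frobenius_norm_def, Real.sqrt_eq_rpow, Real.rpow_two, Real.norm_eq_abs,
    sq_abs]

theorem frobNorm_mul_le (A B : Matrix (Fin n) (Fin n) ℝ) :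
    frobNorm (A * B) ≤ frobNorm A * frobNorm B := by
  simp only [frobNorm_eq_frobenius_norm]
  exact frobenius_norm_mul A B

open scoped Matrix.Norms.L2Operator

theorem frobNorm_le_sqrt_mul_specNorm (A : Matrix (Fin n) (Fin n) ℝ) :
    frobNorm A ≤ √n * specNorm A := by
  have hsum : ∑ i, ∑ j, A i j ^ 2 ≤ n * specNorm A ^ 2 := by
    rw [Finset.sum_comm]
    calc ∑ j, ∑ i, A i j ^ 2 ≤ ∑ _j : Fin n, specNorm A ^ 2 :=
          Finset.sum_le_sum fun j _ => sum_sq_apply_le_l2_opNorm_sq A j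
      _ = n * specNorm A ^ 2 := by simp
  calc frobNorm A ≤ √(n * specNorm A ^ 2) := Real.sqrt_le_sqrt hsum
    _ = √n * specNorm A := by
      rw [Real.sqrt_mul n.cast_nonneg, Real.sqrt_sq (show 0 ≤ specNorm A from norm_nonneg _)]

theorem specNorm_pow_le (A : Matrix (Fin n) (Fin n) ℝ) {k : ℕ} (hk : 0 < k) :
    specNorm (A ^ k) ≤ specNorm A ^ k :=
  norm_pow_le' A hk

end MatrixNorms

/-- **Closed-form Neumann truncation error and orthogonality defect**:
(i) `Cay(X) − Cay^{(K)}(X) = X^{K+1} Cay(X)`;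
(ii) `‖Cay(X) − Cay^{(K)}(X)‖_F = ‖X^{K+1}‖_F ≤ √n ρ^{K+1}` with `ρ = ‖X‖₂`;
(iii) for even `K`, `‖Cay^{(K)}(X)ᵀ Cay^{(K)}(X) − I‖_F ≤ ‖X^{K+1}‖_F²`. -/
theorem neumann_truncation_error {n : ℕ} (K : ℕ)
    (X : Matrix (Fin n) (Fin n) ℝ) (hX : Xᵀ = -X) :
    cayleyFull X - cayleyTrunc K X = X ^ (K + 1) * cayleyFull X ∧
    cayleyTrunc K X = (1 - X ^ (K + 1)) * cayleyFull X ∧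
    frobNorm (cayleyFull X - cayleyTrunc K X) = frobNorm (X ^ (K + 1)) ∧
    frobNorm (X ^ (K + 1)) ≤ Real.sqrt n * specNorm X ^ (K + 1) ∧
    (Even K →
      frobNorm ((cayleyTrunc K X)ᵀ * cayleyTrunc K X - 1)
        ≤ frobNorm (X ^ (K + 1)) ^ 2) := by
  set C := cayleyFull X
  set E := X ^ (K + 1)
  have hC : C * Cᵀ = 1 := cayleyFull_mul_transpose hX
  have htrunc : cayleyTrunc K X = (1 - E) * C := cayleyTrunc_eq_one_sub_pow_mul_cayleyFull K hX
  have hdiff : C - cayleyTrunc K X = E * C := by rw [htrunc, sub_mul, one_mul, sub_sub_cancel]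
  refine ⟨hdiff, htrunc, ?_, ?_, fun hK => ?_⟩
  · rw [hdiff, frobNorm_mul_of_mul_transpose_eq_one E hC]
  · calc frobNorm E ≤ √n * specNorm E := frobNorm_le_sqrt_mul_specNorm E
      _ ≤ √n * specNorm X ^ (K + 1) := by gcongr; exact specNorm_pow_le X K.succ_pos
  · have hE : Eᵀ = -E := by rw [transpose_pow, hX, hK.add_one.neg_pow]
    rw [htrunc, transpose_mul_self_sub_one_of_transpose_eq_neg hE (mul_eq_one_comm.1 hC),
      frobNorm_neg, frobNorm_mul_of_mul_transpose_eq_one _ hC,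
      frobNorm_mul_of_transpose_mul_eq_one _ (by rwa [transpose_transpose]), sq]
    exact frobNorm_mul_le E E
end
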